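/- For c.h.p.o.'s K and K', the application functor Ap : [K → K'] × K → K' defined by Ap(f,x) = f(x) is continuous. -/
import Mathlib


universe u v w

/-- Vertices `x, y` of an h.p.o. (the largest sub-Kan complex of a 0-∞-category, modelled
by the preorder of its vertices under the weak order `≾`) are equivalent (`x ≃ y`) if
`x ≾ y` and `y ≾ x`. -/
def HEquiv {K : Type u} [Preorder K] (x y : K) : Prop := x ≤ y ∧ y ≤ x

/-- A sub-h.p.o. `X ⊆ K` is directed if it is nonempty and any two of its vertices admit an
upper bound in `X`. -/
def HDirected {K : Type u} [Preorder K] (X : Set K) : Prop :=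
  X.Nonempty ∧ ∀ x ∈ X, ∀ y ∈ X, ∃ z ∈ X, x ≤ z ∧ y ≤ z

/-- An h.p.o. `K` is a complete homotopy partial order (c.h.p.o.) if it has a minimum element
and every directed sub-h.p.o. has a supremum (a least upper bound, unique up to `HEquiv`). -/
def IsCHPO (K : Type u) [Preorder K] : Prop :=
  (∃ b : K, ∀ x, b ≤ x) ∧ ∀ X : Set K, HDirected X → ∃ s, IsLUB X s

/-- A functor `f : K → K'` of c.h.p.o.'s is continuous if `f(⋁X) ≃ ⋁ f(X)` for every
directed `X ⊆ K`, i.e. `f` sends any supremum of a directed set to a supremum of its image. -/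
def HContinuous {K : Type u} {K' : Type v} [Preorder K] [Preorder K'] (f : K → K') : Prop :=
  ∀ X : Set K, HDirected X → ∀ s : K, IsLUB X s → IsLUB (f '' X) (f s)

/-- `[K → K']`: the h.p.o. of continuous functors from `K` to `K'`. -/
def ContHom (K : Type u) (K' : Type v) [Preorder K] [Preorder K'] : Type (max u v) :=
  {f : K → K' // HContinuous f}

/-- The pointwise order on `[K → K']`: `f ≾ g` iff `f x ≾ g x` for all `x ∈ K`. -/
instance ContHom.instPreorder {K : Type u} {K' : Type v} [Preorder K] [Preorder K'] :
    Preorder (ContHom K K') :=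
  Preorder.lift (fun f => (f.1 : K → K'))

lemma HContinuous.monotone {K : Type u} {K' : Type v} [Preorder K] [Preorder K']
    {f : K → K'} (hf : HContinuous f) : Monotone f := by
  intro a b hab
  have hd : HDirected ({a, b} : Set K) := by
    refine ⟨⟨a, by simp⟩, ?_⟩
    rintro x hx y hy
    refine ⟨b, by simp, ?_, ?_⟩ <;>
      rcases hx with rfl | rfl <;> rcases hy with rfl | rfl <;> simp [hab]
  have hlub : IsLUB ({a, b} : Set K) b := by
    constructor
    · rintro x (rfl | rfl) <;> simp [hab]
    · intro c hc
      exact hc (by simp)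
  exact (hf _ hd _ hlub).1 ⟨a, by simp, rfl⟩

/-- Continuity of application: for c.h.p.o.'s `K`, `K'`, the application functor
`Ap : [K → K'] × K → K'`, `Ap (f, x) = f x`, is continuous (where `[K → K']` carries the
pointwise order and `[K → K'] × K` the componentwise product order). -/
theorem application_continuous {K : Type u} {K' : Type v} [Preorder K] [Preorder K']
    (hK : IsCHPO K) (hK' : IsCHPO K') :
    HContinuous (fun p : ContHom K K' × K => p.1.1 p.2) := by
  intro X hX s hs
  obtain ⟨⟨p0, hp0⟩, hdir⟩ := hX
  set F : ContHom K K' := s.1 with hFdef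
  set x : K := s.2 with hxdef
  set Xf : Set (ContHom K K') := Prod.fst '' X with hXfdef
  set Xs : Set K := Prod.snd '' X with hXsdef
  -- directedness of projections
  have hXfdir : HDirected Xf := by
    refine ⟨⟨p0.1, p0, hp0, rfl⟩, ?_⟩
    rintro _ ⟨p, hp, rfl⟩ _ ⟨q, hq, rfl⟩
    obtain ⟨z, hz, hpz, hqz⟩ := hdir p hp q hq
    exact ⟨z.1, ⟨z, hz, rfl⟩, hpz.1, hqz.1⟩
  have hXsdir : HDirected Xs := by
    refine ⟨⟨p0.2, p0, hp0, rfl⟩, ?_⟩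
    rintro _ ⟨p, hp, rfl⟩ _ ⟨q, hq, rfl⟩
    obtain ⟨z, hz, hpz, hqz⟩ := hdir p hp q hq
    exact ⟨z.2, ⟨z, hz, rfl⟩, hpz.2, hqz.2⟩
  -- component LUBs
  have hxlub : IsLUB Xs x := by
    constructor
    · rintro _ ⟨p, hp, rfl⟩
      exact (hs.1 hp).2
    · intro c hc
      have : s ≤ (F, c) := hs.2 (fun p hp => ⟨(hs.1 hp).1, hc ⟨p, hp, rfl⟩⟩)
      exact this.2
  -- pointwise supremum function
  have hXbdir : ∀ b : K, HDirected ((fun f : ContHom K K' => f.1 b) '' Xf) := by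
    intro b
    obtain ⟨f0, hf0⟩ := hXfdir.1
    refine ⟨⟨f0.1 b, f0, hf0, rfl⟩, ?_⟩
    rintro _ ⟨f, hf, rfl⟩ _ ⟨f', hf', rfl⟩
    obtain ⟨h, hh, hfh, hf'h⟩ := hXfdir.2 f hf f' hf'
    exact ⟨h.1 b, ⟨h, hh, rfl⟩, hfh b, hf'h b⟩
  choose g hg using fun b : K => hK'.2 _ (hXbdir b)
  -- g is monotone
  have hgmono : Monotone g := by
    intro a b hab
    refine (hg a).2 ?_
    rintro _ ⟨f, hf, rfl⟩
    exact le_trans (f.2.monotone hab) ((hg b).1 ⟨f, hf, rfl⟩)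
  -- g is continuous
  have hgcont : HContinuous g := by
    intro Y hY t ht
    constructor
    · rintro _ ⟨y, hy, rfl⟩
      exact hgmono (ht.1 hy)
    · intro w hw
      refine (hg t).2 ?_
      rintro _ ⟨f, hf, rfl⟩
      have hft : IsLUB (f.1 '' Y) (f.1 t) := f.2 Y hY t ht
      refine hft.2 ?_
      rintro _ ⟨y, hy, rfl⟩
      exact le_trans ((hg y).1 ⟨f, hf, rfl⟩) (hw ⟨y, hy, rfl⟩)
  -- F ≤ g pointwise
  have hFg : ∀ b : K, F.1 b ≤ g b := by
    have hub : ∀ p ∈ X, p ≤ ((⟨g, hgcont⟩ : ContHom K K'), x) := by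
      intro p hp
      refine ⟨fun b => (hg b).1 ⟨p.1, ⟨p, hp, rfl⟩, rfl⟩, (hs.1 hp).2⟩
    exact fun b => (hs.2 hub).1 b
  constructor
  · rintro _ ⟨p, hp, rfl⟩
    exact le_trans ((hs.1 hp).1 p.2) (F.2.monotone (hs.1 hp).2)
  · intro u hu
    have key : ∀ f ∈ Xf, ∀ a ∈ Xs, f.1 a ≤ u := by
      rintro _ ⟨p, hp, rfl⟩ _ ⟨q, hq, rfl⟩
      obtain ⟨z, hz, hpz, hqz⟩ := hdir p hp q hq
      calc p.1.1 q.2 ≤ z.1.1 q.2 := hpz.1 q.2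
        _ ≤ z.1.1 z.2 := z.1.2.monotone hqz.2
        _ ≤ u := hu ⟨z, hz, rfl⟩
    have hFx : IsLUB (F.1 '' Xs) (F.1 x) := F.2 Xs hXsdir x hxlub
    refine hFx.2 ?_
    rintro _ ⟨a, ha, rfl⟩
    refine le_trans (hFg a) ((hg a).2 ?_)
    rintro _ ⟨f, hf, rfl⟩
    exact key f hf a ha
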